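/- Let w ∈ S_n with R(w) row-strict, i = w(n), w = vy the canonical factorization, and λ' the composition of n−1 obtained by deleting the box of n from R(w). For each 2 ≤ k ≤ n−1, conjugation by v carries B_k(w) onto B_k(y): v⁻¹ B_k(w) v = B_k(y), where B_k(y) is the analogous subgroup for y ∈ S_{n−1}, R(y) ∈ RS(λ'), and the nilpotent X_{λ'} given by restricting v⁻¹X_λv to span{e_1,…,e_{n−1}}. -/

import Mathlib

open Matrix

attribute [local instance] Classical.propDecidable

noncomputable section

/-- Label of the box in row `i` (0-indexed from the top), column `j` (0-indexed) of the base
filling of the weak composition `lam`: columns filled left to right, each column bottom to top,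
labels `1,…,n`. -/
def baseLabel (lam : List ℕ) (i j : ℕ) : ℕ :=
  (∑ i' ∈ Finset.range lam.length, min (lam.getD i' 0) j) +
    ((Finset.Ico i lam.length).filter (fun i' => j < lam.getD i' 0)).card

def IsBox (lam : List ℕ) (i j : ℕ) : Prop :=
  i < lam.length ∧ j < lam.getD i 0

/-- The nilpotent matrix `X_λ = Σ E_{ℓ r}` over pairs where the box labeled `r` is directly right
of the box labeled `ℓ` in the base filling (labels are 1-indexed; matrix indices 0-indexed). -/
def Xlam (n : ℕ) (lam : List ℕ) : Matrix (Fin n) (Fin n) ℂ :=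
  fun ℓ r => if (∃ i j, IsBox lam i (j+1) ∧ baseLabel lam i j = (ℓ : ℕ) + 1 ∧
      baseLabel lam i (j+1) = (r : ℕ) + 1) then 1 else 0

def IsFullFlag (n : ℕ) (V : ℕ → Submodule ℂ (Fin n → ℂ)) : Prop :=
  V 0 = ⊥ ∧ (∀ i, V i ≤ V (i+1)) ∧ ∀ i, i ≤ n → Module.finrank ℂ (V i) = i

def InHess (n : ℕ) (X : Matrix (Fin n) (Fin n) ℂ) (h : ℕ → ℕ)
    (V : ℕ → Submodule ℂ (Fin n → ℂ)) : Prop :=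
  ∀ i, i ≤ n → ∀ v ∈ V i, X.mulVec v ∈ V (h i)

/-- The flag `wE_•`, whose `k`-th space is spanned by `e_{w(1)},…,e_{w(k)}` (0-indexed). -/
def permFlag (n : ℕ) (w : Equiv.Perm (Fin n)) : ℕ → Submodule ℂ (Fin n → ℂ) :=
  fun k => Submodule.span ℂ {v | ∃ j : Fin n, (j : ℕ) < k ∧ v = Pi.single (w j) (1 : ℂ)}

/-- The flag whose `k`-th space is spanned by the first `k` columns of `g`. -/
def matFlag (n : ℕ) (g : Matrix (Fin n) (Fin n) ℂ) : ℕ → Submodule ℂ (Fin n → ℂ) :=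
  fun k => Submodule.span ℂ {c | ∃ j : Fin n, (j : ℕ) < k ∧ c = fun a => g a j}

def permMat (n : ℕ) (σ : Equiv.Perm (Fin n)) : Matrix (Fin n) (Fin n) ℂ :=
  fun a b => if σ b = a then 1 else 0

def invSet (n : ℕ) (w : Equiv.Perm (Fin n)) : Finset (Fin n × Fin n) :=
  Finset.univ.filter (fun p => p.2 < p.1 ∧ w p.1 < w p.2)

def blen (n : ℕ) (w : Equiv.Perm (Fin n)) : ℕ := (invSet n w).card

/-- `v = s_i s_{i+1} ⋯ s_{n-1}` (0-indexed simple transpositions `swap j (j+1)`). -/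
def vPerm (n : ℕ) (i : ℕ) : Equiv.Perm (Fin (n+1)) :=
  ((List.Ico i n).map (fun j : ℕ => Equiv.swap (Fin.ofNat (n+1) j) (Fin.ofNat (n+1) (j+1 : ℕ)))).prod

/-- `R(w)` is row-strict: the entry in the box labeled `m` of the base filling is `w⁻¹(m)`,
so entry `p` (0-indexed) occupies the box whose base label is `w(p)+1`. -/
def RowStrictT (n : ℕ) (lam : List ℕ) (w : Equiv.Perm (Fin n)) : Prop :=
  ∀ i j, IsBox lam i (j+1) → ∀ p q : Fin n,
    (w p : ℕ) + 1 = baseLabel lam i j → (w q : ℕ) + 1 = baseLabel lam i (j+1) → p < q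

def HStrictT (n : ℕ) (lam : List ℕ) (h : ℕ → ℕ) (w : Equiv.Perm (Fin n)) : Prop :=
  ∀ i j, IsBox lam i (j+1) → ∀ p q : Fin n,
    (w p : ℕ) + 1 = baseLabel lam i j → (w q : ℕ) + 1 = baseLabel lam i (j+1) →
      (p : ℕ) + 1 ≤ h ((q : ℕ) + 1)

/-- `(k,ℓ)` is a Hessenberg inversion of `R(w)` (entries 0-indexed: values are index+1). -/
def HessInvT (n : ℕ) (lam : List ℕ) (h : ℕ → ℕ) (w : Equiv.Perm (Fin n)) (k ℓ : Fin n) : Prop :=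
  ℓ < k ∧ ∃ ik jk il jl : ℕ, IsBox lam ik jk ∧ IsBox lam il jl ∧
    baseLabel lam ik jk = (w k : ℕ) + 1 ∧ baseLabel lam il jl = (w ℓ : ℕ) + 1 ∧
    (jk < jl ∨ (jk = jl ∧ il < ik)) ∧
    (∀ r : Fin n, IsBox lam il (jl + 1) → (w r : ℕ) + 1 = baseLabel lam il (jl + 1) →
      (k : ℕ) + 1 ≤ h ((r : ℕ) + 1))

/-- Springer inversions: Hessenberg inversions for `h = (0,1,…,n-1)`, i.e. `h(i) = i - 1`. -/
def SpringerInvT (n : ℕ) (lam : List ℕ) (w : Equiv.Perm (Fin n)) (k ℓ : Fin n) : Prop :=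
  HessInvT n lam (fun m => m - 1) w k ℓ

/-- The box labeled `b+1` is directly right of the box labeled `a+1` in the base filling. -/
def RightNbr (lam : List ℕ) (a b : ℕ) : Prop :=
  ∃ i j, IsBox lam i (j+1) ∧ baseLabel lam i j = a + 1 ∧ baseLabel lam i (j+1) = b + 1

/-- The box labeled `a+1` is at the end of its row in the base filling. -/
def EndOfRow (lam : List ℕ) (a : ℕ) : Prop :=
  ∃ i j, IsBox lam i j ∧ ¬ IsBox lam i (j+1) ∧ baseLabel lam i j = a + 1

def IsUpperUnip (n : ℕ) (g : Matrix (Fin n) (Fin n) ℂ) : Prop :=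
  (∀ i, g i i = 1) ∧ ∀ i j : Fin n, j < i → g i j = 0

/-- `U_i`: upper unipotent matrices whose off-diagonal entries are supported in row `i`. -/
def InUi (n : ℕ) (i : Fin n) (g : Matrix (Fin n) (Fin n) ℂ) : Prop :=
  IsUpperUnip n g ∧ ∀ a b : Fin n, a ≠ b → g a b ≠ 0 → a = i

/-- `U_0`: upper unipotent matrices of `GL_n` embedded in `GL_{n+1}` (last column trivial). -/
def InU0 (n : ℕ) (g : Matrix (Fin (n+1)) (Fin (n+1)) ℂ) : Prop :=
  IsUpperUnip (n+1) g ∧ ∀ a : Fin (n+1), a ≠ Fin.last n → g a (Fin.last n) = 0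

/-- The element of `B_k(w)` with coordinates `x`: it sends `e_{w(j)} = X_λ^m e_{w(ℓ)}` to
`e_{w(j)} + x ℓ • X_λ^m e_{w(k)}` for Springer inversions `(k,ℓ)`, fixing all other `e_{w(j)}`. -/
def BkMat (n : ℕ) (lam : List ℕ) (w : Equiv.Perm (Fin n)) (k : Fin n) (x : Fin n → ℂ) :
    Matrix (Fin n) (Fin n) ℂ :=
  1 + ∑ ℓ : Fin n, if SpringerInvT n lam w k ℓ then
      x ℓ • (∑ m ∈ Finset.range n,
        (Xlam n lam) ^ m * Matrix.single (w k) (w ℓ) (1 : ℂ) * ((Xlam n lam)ᵀ) ^ m)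
    else 0

/-- The product `g_n g_{n-1} ⋯ g_2` of elements `g_k ∈ B_k(w)` with coordinates `x k`. -/
def bigB (n : ℕ) (lam : List ℕ) (w : Equiv.Perm (Fin n)) (x : Fin n → Fin n → ℂ) :
    Matrix (Fin n) (Fin n) ℂ :=
  ((List.ofFn (fun k : Fin n => BkMat n lam w k (x k))).reverse).prod

/- Abstract fillings `T : row → column → value` of the diagram of `lam`, values in `[1, n]`. -/

def RowStrictF (lam : List ℕ) (T : ℕ → ℕ → ℕ) : Prop :=
  ∀ i j, IsBox lam i (j+1) → T i j < T i (j+1)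

def HStrictF (lam : List ℕ) (h : ℕ → ℕ) (T : ℕ → ℕ → ℕ) : Prop :=
  ∀ i j, IsBox lam i (j+1) → T i j ≤ h (T i (j+1))

def GoodFilling (lam : List ℕ) (T : ℕ → ℕ → ℕ) : Prop :=
  (∀ i j, IsBox lam i j → 1 ≤ T i j ∧ T i j ≤ lam.sum) ∧
  (∀ m, 1 ≤ m → m ≤ lam.sum → ∃ i j, IsBox lam i j ∧ T i j = m) ∧
  (∀ i j i' j', IsBox lam i j → IsBox lam i' j' → T i j = T i' j' → i = i' ∧ j = j')

def HessInvF (lam : List ℕ) (h : ℕ → ℕ) (T : ℕ → ℕ → ℕ) (k ℓ : ℕ) : Prop :=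
  ℓ < k ∧ ∃ ik jk il jl : ℕ, IsBox lam ik jk ∧ IsBox lam il jl ∧
    T ik jk = k ∧ T il jl = ℓ ∧
    (jk < jl ∨ (jk = jl ∧ il < ik)) ∧
    (IsBox lam il (jl + 1) → k ≤ h (T il (jl + 1)))

/-- `S` is obtained from `T` by sorting each column increasingly from top to bottom:
same column entries (as sets, entries being distinct), with columns of `S` increasing. -/
def ColSortedOf (lam : List ℕ) (T S : ℕ → ℕ → ℕ) : Prop :=
  (∀ j m, (∃ i, IsBox lam i j ∧ T i j = m) ↔ (∃ i, IsBox lam i j ∧ S i j = m)) ∧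
  (∀ i j, IsBox lam i j → IsBox lam (i+1) j → S i j < S (i+1) j)

def IsPartitionL (lam : List ℕ) : Prop :=
  ∀ i i', i ≤ i' → lam.getD i' 0 ≤ lam.getD i 0

def hessInvCount (lam : List ℕ) (h : ℕ → ℕ) (T : ℕ → ℕ → ℕ) : ℕ :=
  (((Finset.range (lam.sum + 1)) ×ˢ (Finset.range (lam.sum + 1))).filter
    (fun p => HessInvF lam h T p.1 p.2)).card

def Hspace (n : ℕ) (h : ℕ → ℕ) : Submodule ℂ (Matrix (Fin n) (Fin n) ℂ) :=
  Submodule.span ℂ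
    {A | ∃ i j : Fin n, (i : ℕ) + 1 ≤ h ((j : ℕ) + 1) ∧ A = Matrix.single i j (1 : ℂ)}

/-- Left-nested iterated bracket `[f (m), [f (m-1), [⋯ [f 1, f 0]]]]`. -/
def iterBr (n : ℕ) (f : ℕ → Matrix (Fin n) (Fin n) ℂ) : ℕ → Matrix (Fin n) (Fin n) ℂ
  | 0 => f 0
  | (m+1) => f (m+1) * iterBr n f m - iterBr n f m * f (m+1)

/-!
Since `R(w)` is row-strict, the largest entry `n` sits at the end of its row, in the box with
base label `w(n)`. Deleting that box renumbers the remaining boxes of the base filling by the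
order-preserving bijection onto the labels other than `w(n)`, and this bijection is the
restriction of `v`. So conjugation by `v` turns the boxes of the entries of `R(w)` into those of
`R(y)`, which leaves the Springer inversions `(k, ℓ)` with `k < n` unchanged, and turns `X_λ` into
a matrix that agrees with `X_{λ'}` off the last column and, like `X_{λ'}`, has vanishing last row.
Hence their powers agree off the last column, which is all that the generators of `B_k` see.
-/

theorem List.sum_eq_sum_range_getD (l : List ℕ) :
    l.sum = ∑ i ∈ Finset.range l.length, l.getD i 0 := by
  induction l with
  | nil => simp
  | cons a t ih => simp [Finset.sum_range_succ', ih, add_comm]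

section BaseFilling

variable (lam : List ℕ)

def colSum (j : ℕ) : ℕ :=
  ∑ i ∈ Finset.range lam.length, min (lam.getD i 0) j

def rowsFrom (i j : ℕ) : Finset ℕ :=
  (Finset.Ico i lam.length).filter (fun i' => j < lam.getD i' 0)

theorem baseLabel_eq_colSum_add (i j : ℕ) :
    baseLabel lam i j = colSum lam j + (rowsFrom lam i j).card := rfl

theorem colSum_mono : Monotone (colSum lam) := fun _ _ h =>
  Finset.sum_le_sum fun _ _ => min_le_min le_rfl h

theorem colSum_le_sum (j : ℕ) : colSum lam j ≤ lam.sum := by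
  rw [lam.sum_eq_sum_range_getD]
  exact Finset.sum_le_sum fun _ _ => min_le_left _ _

theorem card_rowsFrom_le (i j : ℕ) :
    (rowsFrom lam i j).card ≤ colSum lam (j + 1) - colSum lam j := by
  have hsucc : colSum lam (j + 1) = colSum lam j + ((Finset.range lam.length).filter
      (fun i' => j < lam.getD i' 0)).card := by
    rw [colSum, colSum, Finset.card_filter, ← Finset.sum_add_distrib]
    refine Finset.sum_congr rfl fun i' _ => ?_
    split_ifs <;> omega
  have hsub : rowsFrom lam i j ⊆ (Finset.range lam.length).filter
      (fun i' => j < lam.getD i' 0) :=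
    Finset.filter_subset_filter _ fun a ha => Finset.mem_range.mpr (Finset.mem_Ico.mp ha).2
  have := Finset.card_le_card hsub
  omega

variable {lam}

theorem mem_rowsFrom_self {i j : ℕ} (hb : IsBox lam i j) : i ∈ rowsFrom lam i j :=
  Finset.mem_filter.mpr ⟨Finset.mem_Ico.mpr ⟨le_rfl, hb.1⟩, hb.2⟩

theorem colSum_lt_baseLabel {i j : ℕ} (hb : IsBox lam i j) : colSum lam j < baseLabel lam i j := by
  have := Finset.card_pos.mpr ⟨i, mem_rowsFrom_self hb⟩
  rw [baseLabel_eq_colSum_add]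
  omega

theorem baseLabel_le_colSum_succ (i j : ℕ) : baseLabel lam i j ≤ colSum lam (j + 1) := by
  have := card_rowsFrom_le lam i j
  have := colSum_mono lam (Nat.le_add_right j 1)
  rw [baseLabel_eq_colSum_add]
  omega

theorem baseLabel_le_sum (lam : List ℕ) (i j : ℕ) : baseLabel lam i j ≤ lam.sum :=
  (baseLabel_le_colSum_succ i j).trans (colSum_le_sum lam _)

theorem baseLabel_lt_of_row_lt {i i' j : ℕ} (hb : IsBox lam i j) (h : i < i') :
    baseLabel lam i' j < baseLabel lam i j := by
  have hss : rowsFrom lam i' j ⊂ rowsFrom lam i j := by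
    refine (Finset.ssubset_iff_of_subset (Finset.filter_subset_filter _
      (Finset.Ico_subset_Ico h.le le_rfl))).mpr ⟨i, mem_rowsFrom_self hb, ?_⟩
    simp only [Finset.mem_filter, Finset.mem_Ico]
    omega
  have := Finset.card_lt_card hss
  rw [baseLabel_eq_colSum_add, baseLabel_eq_colSum_add]
  omega

theorem baseLabel_lt_of_col_lt {i i' j j' : ℕ} (hb' : IsBox lam i' j') (h : j < j') :
    baseLabel lam i j < baseLabel lam i' j' :=
  ((baseLabel_le_colSum_succ i j).trans (colSum_mono lam h)).trans_lt (colSum_lt_baseLabel hb')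

theorem baseLabel_lt_baseLabel_iff {i j i' j' : ℕ} (hb : IsBox lam i j) (hb' : IsBox lam i' j') :
    baseLabel lam i j < baseLabel lam i' j' ↔ j < j' ∨ (j = j' ∧ i' < i) := by
  refine ⟨fun h => ?_, ?_⟩
  · by_contra hne
    rcases lt_or_eq_of_le (not_lt.mp fun hj => hne (Or.inl hj)) with hj | rfl
    · exact absurd h (baseLabel_lt_of_col_lt hb hj).not_gt
    · rcases lt_trichotomy i i' with hi | rfl | hi
      · exact absurd h (baseLabel_lt_of_row_lt hb hi).not_gt
      · exact lt_irrefl _ h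
      · exact hne (Or.inr ⟨rfl, hi⟩)
  · rintro (hj | ⟨rfl, hi⟩)
    · exact baseLabel_lt_of_col_lt hb' hj
    · exact baseLabel_lt_of_row_lt hb' hi

end BaseFilling

theorem vPerm_self (n : ℕ) : vPerm n n = 1 := by
  simp [vPerm]

theorem vPerm_eq_swap_mul {n c : ℕ} (hc : c < n) :
    vPerm n c = Equiv.swap (Fin.ofNat (n+1) c) (Fin.ofNat (n+1) (c+1)) * vPerm n (c+1) := by
  rw [vPerm, List.Ico.eq_cons hc, List.map_cons, List.prod_cons, vPerm]

theorem val_vPerm_apply {n c : ℕ} (hc : c ≤ n) (p : Fin (n+1)) :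
    (vPerm n c p : ℕ) =
      if (p : ℕ) < c then (p : ℕ) else if (p : ℕ) = n then c else (p : ℕ) + 1 := by
  induction hd : n - c generalizing c with
  | zero =>
    obtain rfl : c = n := by omega
    have := p.isLt
    simp only [vPerm_self, Equiv.Perm.one_apply]
    split_ifs <;> omega
  | succ d ih =>
    have hq := ih (c := c + 1) (by omega) (by omega)
    have hp := p.isLt
    rw [vPerm_eq_swap_mul (by omega), Equiv.Perm.mul_apply, Equiv.swap_apply_def]
    have h0 : ((Fin.ofNat (n+1) c : Fin (n+1)) : ℕ) = c := Nat.mod_eq_of_lt (by omega)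
    have h1 : ((Fin.ofNat (n+1) (c+1) : Fin (n+1)) : ℕ) = c + 1 := Nat.mod_eq_of_lt (by omega)
    simp only [Fin.ext_iff, h0, h1]
    split_ifs at hq ⊢ <;> omega

theorem List.getD_set_ne {α : Type*} {l : List α} {i j : ℕ} {a d : α} (h : i ≠ j) :
    (l.set i a).getD j d = l.getD j d := by
  simp [List.getD_eq_getElem?_getD, h]

theorem List.getD_set_self {α : Type*} {l : List α} {i : ℕ} {a d : α} (h : i < l.length) :
    (l.set i a).getD i d = a := by
  simp [List.getD_eq_getElem?_getD, h]

section RemoveBox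

variable {lam : List ℕ} {i0 j0 : ℕ}
variable (hi0 : i0 < lam.length) (hrow : lam.getD i0 0 = j0 + 1)
include hi0 hrow

theorem isBox_set_iff {i j : ℕ} :
    IsBox (lam.set i0 j0) i j ↔ IsBox lam i j ∧ ¬(i = i0 ∧ j = j0) := by
  unfold IsBox
  rw [List.length_set]
  rcases eq_or_ne i i0 with rfl | h
  · rw [List.getD_set_self hi0, hrow]
    omega
  · rw [List.getD_set_ne (Ne.symm h)]
    tauto

theorem colSum_set (j : ℕ) :
    colSum lam j = colSum (lam.set i0 j0) j + if j0 < j then 1 else 0 := by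
  have hmem : i0 ∈ Finset.range lam.length := Finset.mem_range.mpr hi0
  have hrest : ∑ i ∈ (Finset.range lam.length).erase i0, min ((lam.set i0 j0).getD i 0) j =
      ∑ i ∈ (Finset.range lam.length).erase i0, min (lam.getD i 0) j :=
    Finset.sum_congr rfl fun i hi => by rw [List.getD_set_ne (Finset.ne_of_mem_erase hi).symm]
  rw [colSum, colSum, List.length_set, ← Finset.add_sum_erase _ _ hmem,
    ← Finset.add_sum_erase _ _ hmem, hrest, List.getD_set_self hi0, hrow]
  split_ifs <;> omega

theorem rowsFrom_set (i j : ℕ) :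
    rowsFrom (lam.set i0 j0) i j = if j = j0 then (rowsFrom lam i j).erase i0
      else rowsFrom lam i j := by
  ext i'
  rcases eq_or_ne i' i0 with rfl | h
  · simp only [rowsFrom, Finset.mem_filter, List.length_set, List.getD_set_self hi0]
    split_ifs <;> simp only [Finset.mem_erase, Finset.mem_filter, Finset.mem_Ico, hrow, ne_eq,
      not_true_eq_false, false_and] <;> grind
  · simp only [rowsFrom, Finset.mem_filter, List.length_set, List.getD_set_ne (Ne.symm h)]
    split_ifs <;> simp [h]

theorem baseLabel_set (i j : ℕ) :
    baseLabel lam i j = baseLabel (lam.set i0 j0) i j +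
      if j0 < j ∨ (j = j0 ∧ i ≤ i0) then 1 else 0 := by
  rw [baseLabel_eq_colSum_add, baseLabel_eq_colSum_add, colSum_set hi0 hrow, rowsFrom_set hi0 hrow]
  by_cases hj : j = j0
  · have hcard : (rowsFrom lam i j).card =
        ((rowsFrom lam i j).erase i0).card + if i ≤ i0 then 1 else 0 := by
      split_ifs with hi
      · exact (Finset.card_erase_add_one (Finset.mem_filter.mpr
          ⟨Finset.mem_Ico.mpr ⟨hi, hi0⟩, by omega⟩)).symm
      · rw [Finset.erase_eq_of_notMem (s := rowsFrom lam i j)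
          fun h => hi (Finset.mem_Ico.mp (Finset.mem_filter.mp h).1).1, add_zero]
    rw [if_pos hj, hcard]
    split_ifs <;> omega
  · rw [if_neg hj]
    split_ifs <;> omega

end RemoveBox

theorem getD_eq_succ_of_rowStrictT {n i0 j0 : ℕ} {lam : List ℕ} {w : Equiv.Perm (Fin (n+1))}
    (hn : lam.sum = n + 1) (hrs : RowStrictT (n+1) lam w) (hbox : IsBox lam i0 j0)
    (hlab : baseLabel lam i0 j0 = (w (Fin.last n) : ℕ) + 1) : lam.getD i0 0 = j0 + 1 := by
  by_contra hne
  have hright : IsBox lam i0 (j0 + 1) := ⟨hbox.1, by have := hbox.2; omega⟩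
  have hpos := colSum_lt_baseLabel hright
  have hle := baseLabel_le_sum lam i0 (j0 + 1)
  set q := w.symm ⟨baseLabel lam i0 (j0 + 1) - 1, by omega⟩
  have hq : (w q : ℕ) + 1 = baseLabel lam i0 (j0 + 1) := by
    simp only [q, Equiv.apply_symm_apply]
    omega
  exact (hrs i0 j0 hright (Fin.last n) q hlab.symm hq).not_ge (Fin.le_last q)

/-- `LabelAt lam i j (u r)` says that the box `(i, j)` holds the entry `r` of `R(u)`. -/
def LabelAt (lam : List ℕ) (i j a : ℕ) : Prop :=
  IsBox lam i j ∧ baseLabel lam i j = a + 1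

theorem labelAt_vPerm_iff {n c i0 j0 : ℕ} {lam : List ℕ} (hn : lam.sum = n + 1)
    (hi0 : i0 < lam.length) (hrow : lam.getD i0 0 = j0 + 1)
    (hlab : baseLabel lam i0 j0 = c + 1) (p : Fin (n+1)) (i j : ℕ) :
    LabelAt lam i j (vPerm n c p) ↔
      LabelAt (lam.set i0 j0) i j p ∨ (p = Fin.last n ∧ i = i0 ∧ j = j0) := by
  have hb0 : IsBox lam i0 j0 := ⟨hi0, by omega⟩
  have hc : c ≤ n := by have := baseLabel_le_sum lam i0 j0; omega
  have hv := val_vPerm_apply hc p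
  have hp := p.isLt
  simp only [LabelAt, isBox_set_iff hi0 hrow, Fin.ext_iff, Fin.val_last]
  by_cases h0 : i = i0 ∧ j = j0
  · obtain ⟨rfl, rfl⟩ := h0
    simp only [hb0, hlab, and_self, not_true_eq_false, and_false, false_and, false_or, true_and,
      and_true]
    split_ifs at hv <;> omega
  by_cases hb : IsBox lam i j
  · have hL := baseLabel_set hi0 hrow i j
    have hlt := baseLabel_lt_baseLabel_iff hb hb0
    have hgt := baseLabel_lt_baseLabel_iff hb0 hb
    have hle := baseLabel_le_sum lam i j
    simp only [hb, h0, true_and, not_false_eq_true, and_false, or_false]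
    -- `hL`: the labels after the deleted one drop by one; `hlt`, `hgt`: no other box has its label.
    split_ifs at hL hv <;> omega
  · simp only [hb, h0, false_and, and_false, or_false]

theorem permMat_eq_permMatrix (n : ℕ) (σ : Equiv.Perm (Fin n)) :
    permMat n σ = σ⁻¹.permMatrix ℂ := by
  ext a b
  simp [permMat, PEquiv.toMatrix_apply, Equiv.eq_symm_apply, eq_comm]

theorem permMat_inv_mul_mul_permMat (n : ℕ) (σ : Equiv.Perm (Fin n))
    (M : Matrix (Fin n) (Fin n) ℂ) :
    permMat n σ⁻¹ * M * permMat n σ = M.submatrix σ σ := by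
  rw [permMat_eq_permMatrix, permMat_eq_permMatrix, inv_inv, PEquiv.toMatrix_toPEquiv_mul,
    PEquiv.mul_toMatrix_toPEquiv, Matrix.submatrix_submatrix]
  rfl

theorem Matrix.mul_single_one_mul_transpose_apply {ι R : Type*} [Fintype ι] [DecidableEq ι]
    [Semiring R] (M : Matrix ι ι R) (p q b c : ι) :
    (M * Matrix.single p q (1 : R) * Mᵀ) b c = M b p * M c q := by
  simp [Matrix.mul_apply, Matrix.single_apply, ite_and]

theorem Matrix.pow_apply_eq_pow_apply_of_row_eq_zero {ι R : Type*} [Fintype ι] [DecidableEq ι]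
    [Semiring R] {A B : Matrix ι ι R} {s : ι} (hA : ∀ c, A s c = 0) (hB : ∀ c, B s c = 0)
    (hAB : ∀ b c, c ≠ s → A b c = B b c) (m : ℕ) (b : ι) {c : ι} (hc : c ≠ s) :
    (A ^ m) b c = (B ^ m) b c := by
  induction m generalizing b with
  | zero => rfl
  | succ m ih =>
    rw [pow_succ', pow_succ', Matrix.mul_apply, Matrix.mul_apply]
    refine Finset.sum_congr rfl fun d _ => ?_
    rcases eq_or_ne d s with rfl | hd
    · cases m with
      | zero => simp [Matrix.one_apply_ne' hc]
      | succ m => simp [pow_succ', Matrix.mul_apply, hA, hB]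
    · rw [hAB b d hd, ih d]

theorem Xlam_apply (n : ℕ) (lam : List ℕ) (a b : Fin n) :
    Xlam n lam a b = if ∃ i j, LabelAt lam i j a ∧ LabelAt lam i (j+1) b then 1 else 0 := by
  refine if_congr ⟨?_, ?_⟩ rfl rfl
  · rintro ⟨i, j, hb, ha, hb'⟩
    exact ⟨i, j, ⟨⟨hb.1, by have := hb.2; omega⟩, ha⟩, hb, hb'⟩
  · rintro ⟨i, j, ⟨-, ha⟩, hb, hb'⟩
    exact ⟨i, j, hb, ha, hb'⟩

theorem hessInvT_iff {n : ℕ} {lam : List ℕ} {h : ℕ → ℕ} {w : Equiv.Perm (Fin n)} {k ℓ : Fin n} :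
    HessInvT n lam h w k ℓ ↔ ℓ < k ∧ ∃ ik jk il jl, LabelAt lam ik jk (w k) ∧
      LabelAt lam il jl (w ℓ) ∧ (jk < jl ∨ (jk = jl ∧ il < ik)) ∧
      ∀ r : Fin n, LabelAt lam il (jl + 1) (w r) → (k : ℕ) + 1 ≤ h ((r : ℕ) + 1) := by
  constructor
  · rintro ⟨hℓk, ik, jk, il, jl, hbk, hbl, hk, hl, hord, htail⟩
    exact ⟨hℓk, ik, jk, il, jl, ⟨hbk, hk⟩, ⟨hbl, hl⟩, hord, fun r hr => htail r hr.1 hr.2.symm⟩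
  · rintro ⟨hℓk, ik, jk, il, jl, ⟨hbk, hk⟩, ⟨hbl, hl⟩, hord, htail⟩
    exact ⟨hℓk, ik, jk, il, jl, hbk, hbl, hk, hl, hord, fun r hb hr => htail r ⟨hb, hr.symm⟩⟩

theorem hessInvT_congr {n i0 j0 : ℕ} {lam lam' : List ℕ} {h : ℕ → ℕ} {w y : Equiv.Perm (Fin n)}
    {s k : Fin n}
    (hlabel : ∀ r i j, LabelAt lam i j (w r) ↔
      LabelAt lam' i j (y r) ∨ (r = s ∧ i = i0 ∧ j = j0))
    (hks : k < s) (hs : (k : ℕ) + 1 ≤ h ((s : ℕ) + 1)) (ℓ : Fin n) :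
    HessInvT n lam h w k ℓ ↔ HessInvT n lam' h y k ℓ := by
  have hne : ∀ r, r ≠ s → ∀ i j, LabelAt lam i j (w r) ↔ LabelAt lam' i j (y r) := by
    intro r hr i j
    simp [hlabel, hr]
  rw [hessInvT_iff, hessInvT_iff]
  refine and_congr_right fun hℓk => ?_
  simp only [hne k hks.ne, hne ℓ (hℓk.trans hks).ne, hlabel, or_imp, forall_and,
    forall_eq, and_imp]
  exact exists_congr fun _ => exists_congr fun _ => exists_congr fun _ => exists_congr fun _ =>
    and_congr_right fun _ => and_congr_right fun _ => and_congr_right fun _ =>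
      and_iff_left fun _ _ => hs

theorem List.sum_set_add_one {lam : List ℕ} {i0 j0 : ℕ} (hi0 : i0 < lam.length)
    (hrow : lam.getD i0 0 = j0 + 1) : (lam.set i0 j0).sum + 1 = lam.sum := by
  have hself : lam.set i0 (j0 + 1) = lam := by
    rw [← hrow]
    simp [List.getD_eq_getElem?_getD, hi0]
  conv_rhs => rw [← hself]
  rw [List.sum_set, List.sum_set, if_pos hi0, if_pos (by simpa using hi0)]
  omega

section RemoveLastEntry

variable {n c i0 j0 : ℕ} {lam : List ℕ} (hn : lam.sum = n + 1) (hi0 : i0 < lam.length)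
  (hrow : lam.getD i0 0 = j0 + 1)
include hn hi0 hrow

theorem lt_of_labelAt_set {i j a : ℕ} (h : LabelAt (lam.set i0 j0) i j a) : a < n := by
  have := baseLabel_le_sum (lam.set i0 j0) i j
  have := List.sum_set_add_one hi0 hrow
  have := h.2
  omega

theorem Xlam_set_last_apply (b : Fin (n+1)) : Xlam (n+1) (lam.set i0 j0) (Fin.last n) b = 0 := by
  rw [Xlam_apply, if_neg]
  rintro ⟨i, j, h, -⟩
  exact (lt_of_labelAt_set hn hi0 hrow h).ne rfl

variable (hlab : baseLabel lam i0 j0 = c + 1)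
include hlab

theorem Xlam_vPerm_last_apply (b : Fin (n+1)) :
    Xlam (n+1) lam (vPerm n c (Fin.last n)) b = 0 := by
  rw [Xlam_apply, if_neg]
  rintro ⟨i, j, h, h'⟩
  rcases (labelAt_vPerm_iff hn hi0 hrow hlab _ i j).mp h with h | ⟨-, rfl, rfl⟩
  · exact (lt_of_labelAt_set hn hi0 hrow h).ne rfl
  · exact absurd h'.1.2 (by omega)

theorem Xlam_vPerm_apply (b : Fin (n+1)) {d : Fin (n+1)} (hd : d ≠ Fin.last n) :
    Xlam (n+1) lam (vPerm n c b) (vPerm n c d) = Xlam (n+1) (lam.set i0 j0) b d := by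
  simp only [Xlam_apply, labelAt_vPerm_iff hn hi0 hrow hlab, hd, false_and, or_false]
  refine if_congr (exists_congr fun i => exists_congr fun j => ?_) rfl rfl
  refine and_congr_left fun hd' => or_iff_left ?_
  rintro ⟨-, rfl, rfl⟩
  exact absurd ((isBox_set_iff hi0 hrow).mp hd'.1).1.2 (by omega)

theorem pow_Xlam_vPerm_apply (m : ℕ) (b : Fin (n+1)) {d : Fin (n+1)} (hd : d ≠ Fin.last n) :
    (Xlam (n+1) lam ^ m) (vPerm n c b) (vPerm n c d) = (Xlam (n+1) (lam.set i0 j0) ^ m) b d := by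
  set v := vPerm n c
  have hpow : (Xlam (n+1) lam).submatrix v v ^ m = (Xlam (n+1) lam ^ m).submatrix v v := by
    simpa using (map_pow (Matrix.reindexAlgEquiv ℂ ℂ v.symm) (Xlam (n+1) lam) m).symm
  calc (Xlam (n+1) lam ^ m) (v b) (v d) = ((Xlam (n+1) lam).submatrix v v ^ m) b d := by
        rw [hpow, Matrix.submatrix_apply]
    _ = (Xlam (n+1) (lam.set i0 j0) ^ m) b d :=
      Matrix.pow_apply_eq_pow_apply_of_row_eq_zero (A := (Xlam (n+1) lam).submatrix v v)
        (fun d => Xlam_vPerm_last_apply hn hi0 hrow hlab (v d)) (Xlam_set_last_apply hn hi0 hrow)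
        (fun b _ hd => Xlam_vPerm_apply hn hi0 hrow hlab b hd) m b hd

end RemoveLastEntry

theorem BkMat_submatrix {n : ℕ} {lam lam' : List ℕ} {v y : Equiv.Perm (Fin (n+1))} {k : Fin (n+1)}
    (hk : k ≠ Fin.last n) (hy : y (Fin.last n) = Fin.last n)
    (hSpr : ∀ ℓ, SpringerInvT (n+1) lam (v * y) k ℓ ↔ SpringerInvT (n+1) lam' y k ℓ)
    (hX : ∀ m b {d}, d ≠ Fin.last n →
      (Xlam (n+1) lam ^ m) (v b) (v d) = (Xlam (n+1) lam' ^ m) b d)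
    (x : Fin (n+1) → ℂ) :
    (BkMat (n+1) lam (v * y) k x).submatrix v v = BkMat (n+1) lam' y k x := by
  have hyne : ∀ r, r ≠ Fin.last n → y r ≠ Fin.last n := fun r hr => hy ▸ y.injective.ne hr
  have hφ : ∀ M : Matrix (Fin (n+1)) (Fin (n+1)) ℂ,
      M.submatrix v v = Matrix.reindexAlgEquiv ℂ ℂ v.symm M := fun M => by
    rw [Matrix.coe_reindexAlgEquiv, Matrix.reindex_apply, Equiv.symm_symm]
  rw [hφ, BkMat, BkMat, map_add, map_one, map_sum]
  refine congrArg _ (Finset.sum_congr rfl fun ℓ _ => ?_)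
  by_cases hS : SpringerInvT (n+1) lam' y k ℓ
  · have hℓ : ℓ ≠ Fin.last n := (hS.1.trans_le (Fin.le_last k)).ne
    rw [if_pos ((hSpr ℓ).2 hS), if_pos hS, map_smul, map_sum]
    refine congrArg _ (Finset.sum_congr rfl fun m _ => ?_)
    ext b d
    rw [← hφ, Matrix.submatrix_apply, ← Matrix.transpose_pow, ← Matrix.transpose_pow,
      Matrix.mul_single_one_mul_transpose_apply, Matrix.mul_single_one_mul_transpose_apply,
      Equiv.Perm.mul_apply, Equiv.Perm.mul_apply, hX m b (hyne k hk), hX m d (hyne ℓ hℓ)]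
  · rw [if_neg (mt (hSpr ℓ).1 hS), if_neg hS, map_zero]

theorem stmt14_general (n : ℕ) (lam : List ℕ) (hn : lam.sum = n + 1)
    (w v y : Equiv.Perm (Fin (n+1)))
    (hv : v = vPerm n (w (Fin.last n) : ℕ)) (hy : y = v⁻¹ * w)
    (hrs : RowStrictT (n+1) lam w)
    (i0 j0 : ℕ) (hbox : IsBox lam i0 j0)
    (hlab : baseLabel lam i0 j0 = (w (Fin.last n) : ℕ) + 1)
    (lam' : List ℕ) (hlam' : lam' = lam.set i0 (lam.getD i0 0 - 1))
    (k : Fin (n+1)) (hkn : (k : ℕ) < n) :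
    {M : Matrix (Fin (n+1)) (Fin (n+1)) ℂ |
      ∃ x : Fin (n+1) → ℂ, (∀ ℓ, ¬ SpringerInvT (n+1) lam w k ℓ → x ℓ = 0) ∧
        M = permMat (n+1) v⁻¹ * BkMat (n+1) lam w k x * permMat (n+1) v} =
    {M : Matrix (Fin (n+1)) (Fin (n+1)) ℂ |
      ∃ x : Fin (n+1) → ℂ, (∀ ℓ, ¬ SpringerInvT (n+1) lam' y k ℓ → x ℓ = 0) ∧
        M = BkMat (n+1) lam' y k x} := by
  have hrow := getD_eq_succ_of_rowStrictT hn hrs hbox hlab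
  obtain rfl : lam' = lam.set i0 j0 := by rw [hlam', hrow, Nat.add_sub_cancel]
  have hw : w = v * y := by rw [hy, mul_inv_cancel_left]
  have hvlast : v (Fin.last n) = w (Fin.last n) := by
    have := (w (Fin.last n)).is_le
    rw [hv, Fin.ext_iff, val_vPerm_apply this, Fin.val_last, if_neg this.not_gt, if_pos rfl]
  have hylast : y (Fin.last n) = Fin.last n := by
    rw [hy, Equiv.Perm.mul_apply, ← hvlast, Equiv.Perm.inv_eq_iff_eq]
  have hk : k < Fin.last n := hkn
  have hlabel (r : Fin (n+1)) (i j : ℕ) : LabelAt lam i j (w r) ↔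
      LabelAt (lam.set i0 j0) i j (y r) ∨ (r = Fin.last n ∧ i = i0 ∧ j = j0) := by
    rw [hw, Equiv.Perm.mul_apply, hv, labelAt_vPerm_iff hn hbox.1 hrow hlab,
      y.injective.eq_iff' hylast]
  have hSpr := hessInvT_congr hlabel hk (h := fun m => m - 1) (by simpa using hkn)
  have hBk := BkMat_submatrix hk.ne hylast (hw ▸ hSpr)
    (hv ▸ pow_Xlam_vPerm_apply hn hbox.1 hrow hlab)
  ext M
  simp only [permMat_inv_mul_mul_permMat, Set.mem_ofPred_eq, ← hw] at hBk ⊢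
  constructor
  · rintro ⟨x, hx, rfl⟩
    exact ⟨x, fun ℓ h => hx ℓ (mt (hSpr ℓ).1 h), hBk x⟩
  · rintro ⟨x, hx, rfl⟩
    exact ⟨x, fun ℓ h => hx ℓ (mt (hSpr ℓ).2 h), (hBk x).symm⟩

/-- for `2 ≤ k ≤ n-1`, conjugation by `v` carries `B_k(w)` onto `B_k(y)`:
`v⁻¹ B_k(w) v = B_k(y)`, where `y = v⁻¹w` and `B_k(y)` is the analogous subgroup for the shape
`λ'` obtained by deleting the box of the largest entry of `R(w)`. -/
theorem stmt14 (n : ℕ) (lam : List ℕ) (hn : lam.sum = n + 1)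
    (w v y : Equiv.Perm (Fin (n+1)))
    (hv : v = vPerm n (w (Fin.last n) : ℕ)) (hy : y = v⁻¹ * w)
    (hrs : RowStrictT (n+1) lam w)
    (i0 j0 : ℕ) (hbox : IsBox lam i0 j0)
    (hlab : baseLabel lam i0 j0 = (w (Fin.last n) : ℕ) + 1)
    (lam' : List ℕ) (hlam' : lam' = lam.set i0 (lam.getD i0 0 - 1))
    (k : Fin (n+1)) (hk : 1 ≤ (k : ℕ)) (hkn : (k : ℕ) < n) :
    {M : Matrix (Fin (n+1)) (Fin (n+1)) ℂ |
      ∃ x : Fin (n+1) → ℂ, (∀ ℓ, ¬ SpringerInvT (n+1) lam w k ℓ → x ℓ = 0) ∧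
        M = permMat (n+1) v⁻¹ * BkMat (n+1) lam w k x * permMat (n+1) v} =
    {M : Matrix (Fin (n+1)) (Fin (n+1)) ℂ |
      ∃ x : Fin (n+1) → ℂ, (∀ ℓ, ¬ SpringerInvT (n+1) lam' y k ℓ → x ℓ = 0) ∧
        M = BkMat (n+1) lam' y k x} :=
  stmt14_general n lam hn w v y hv hy hrs i0 j0 hbox hlab lam' hlam' k hkn
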